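/- arXiv:2505.02150 — 4 statements merged into one kernel-verified Lean document; each statement's English description precedes it below -/
import Mathlib

section
/- For every n ≥ 4, the complete graph K_n remains Hamiltonian-connected after deleting any set of at most n−4 edges; that is, for any edge set F with |F| ≤ n−4 and any two distinct vertices s, t, the graph K_n − F contains a Hamiltonian path from s to t. -/
/-!
More generally: if `s ≠ t` lie in a finite vertex set `V` of a graph `G` and at most `#V - 4`
pairs of vertices of `V` other than `{s, t}` are non-adjacent, then some `s`-`t` path of `G` has
vertex set exactly `V`. By induction on `V`: for `#V = 4` the path is `s a b t`. Otherwise delete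
an interior vertex `v` whose number `d` of non-neighbours in `V` is least positive (any interior
vertex if there are none), take a path on `V \ {v}`, and insert `v` between the ends of one of its
`#V - 2` edges, both adjacent to `v`. At most `d + a` edges are blocked, where `a` counts the
non-neighbours of `v` other than `s, t`; these `a` vertices and `v` have at least `d` missing
pairs each, so `(a + 1) d ≤ 2 (#V - 4)`, which forces `d + a < #V - 2`.
-/

open SimpleGraph Finset

theorem List.Nodup.countP_mem_le_card_erase {α : Type*} [DecidableEq α] {l : List α}
    (hl : l.Nodup) {a : α} (ha : a ∉ l) (X : Finset α) : l.countP (· ∈ X) ≤ #(X.erase a) := by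
  rw [List.countP_eq_length_filter, ← List.toFinset_card_of_nodup (hl.filter _)]
  refine card_le_card fun x hx => ?_
  simp only [List.mem_toFinset, List.mem_filter, decide_eq_true_eq] at hx
  exact mem_erase.2 ⟨fun h => ha (h ▸ hx.1), hx.2⟩

theorem Finset.card_erase_add_card_erase {α : Type*} [DecidableEq α] {a b : α} (hab : a ≠ b)
    (X : Finset α) : #(X.erase a) + #(X.erase b) = #X + #(X \ {a, b}) := by
  rw [← card_union_add_card_inter]
  congr 2 <;> ext x <;> simp only [mem_union, mem_inter, mem_erase, mem_sdiff, mem_insert,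
    mem_singleton] <;> grind

namespace SimpleGraph.Walk

variable {α : Type*} [DecidableEq α] {G : SimpleGraph α}

theorem IsPath.exists_isPath_support_toFinset_eq_insert {u w v : α} {p : G.Walk u w}
    (hp : p.IsPath) (hv : v ∉ p.support) {d : G.Dart} (hd : d ∈ p.darts)
    (h₁ : G.Adj v d.fst) (h₂ : G.Adj v d.snd) :
    ∃ q : G.Walk u w, q.IsPath ∧ q.support.toFinset = insert v p.support.toFinset := by
  induction p with
  | nil => simp at hd
  | @cons u x w h p ih =>
    rw [cons_isPath_iff] at hp
    rw [support_cons, List.mem_cons, not_or] at hv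
    rw [darts_cons, List.mem_cons] at hd
    rcases hd with rfl | hd
    · refine ⟨cons h₁.symm (cons h₂ p), ?_, by simp [insert_comm]⟩
      simp_all [cons_isPath_iff, Ne.symm hv.1]
    · obtain ⟨q, hq, hqs⟩ := ih hp.1 hv.2 hd
      refine ⟨cons h q, (cons_isPath_iff _ _).2 ⟨hq, ?_⟩, by simp [hqs, insert_comm]⟩
      rw [← List.mem_toFinset, hqs]
      simp [Ne.symm hv.1, hp.2]

theorem IsPath.exists_dart_fst_notMem_snd_notMem {u w : α} {p : G.Walk u w} (hp : p.IsPath)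
    (X : Finset α) (h : #(X.erase u) + #(X.erase w) < p.length) :
    ∃ d ∈ p.darts, d.fst ∉ X ∧ d.snd ∉ X := by
  by_contra! hbad
  have hw : w ∉ p.support.dropLast := by
    have := hp.support_nodup
    rw [← p.dropLast_support_concat, List.nodup_append] at this
    exact fun hw => this.2.2 _ hw _ (List.mem_singleton_self w) rfl
  have hu : u ∉ p.support.tail := (List.nodup_cons.1 (p.cons_tail_support ▸ hp.support_nodup)).1
  have hfst := (hp.support_nodup.sublist (List.dropLast_sublist _)).countP_mem_le_card_erase hw X
  have hsnd := (hp.support_nodup.sublist (List.tail_sublist _)).countP_mem_le_card_erase hu X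
  rw [← map_fst_darts, List.countP_map] at hfst
  rw [← map_snd_darts, List.countP_map] at hsnd
  have hcover : p.darts.countP (fun d => ¬ d.fst ∈ X) ≤ p.darts.countP (·.snd ∈ X) :=
    List.countP_mono_left fun d hd hX => by simpa using hbad d hd (by simpa using hX)
  have := List.length_eq_countP_add_countP (fun d : G.Dart => d.fst ∈ X) (l := p.darts)
  rw [length_darts] at this
  simp only [decide_eq_true_eq] at this
  simp only [Function.comp_def] at hfst hsnd
  omega

end SimpleGraph.Walk

namespace SimpleGraph

variable {α : Type*} [DecidableEq α]

/-- The pairs of vertices of `V` that are not adjacent in `G`, except `s(s, t)`, which no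
Hamiltonian `s`-`t` path through more than two vertices uses. -/
def missingEdges (G : SimpleGraph α) [DecidableRel G.Adj] (s t : α) (V : Finset α) :
    Finset (Sym2 α) :=
  {e ∈ V.sym2 | e ∈ Gᶜ.edgeSet}.erase s(s, t)

variable {G : SimpleGraph α} [DecidableRel G.Adj] {s t : α} {V : Finset α}

@[simp]
theorem mk_mem_missingEdges {x y : α} :
    s(x, y) ∈ G.missingEdges s t V ↔ s(x, y) ≠ s(s, t) ∧ x ∈ V ∧ y ∈ V ∧ Gᶜ.Adj x y := by
  simp [missingEdges, and_assoc]

theorem card_missingEdges_erase_add_le {v : α} (hv : v ∈ V \ {s, t}) :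
    #(G.missingEdges s t (V.erase v)) + #{u ∈ V | Gᶜ.Adj v u} ≤ #(G.missingEdges s t V) := by
  simp only [mem_sdiff, mem_insert, mem_singleton, not_or] at hv
  have hinj : Set.InjOn (fun u => s(v, u)) ↑({u ∈ V | Gᶜ.Adj v u} : Finset α) := fun x _ y _ h =>
    Sym2.congr_right.1 h
  rw [← card_image_of_injOn hinj, ← card_union_of_disjoint]
  · refine card_le_card (union_subset ?_ ?_)
    · intro e he
      induction e using Sym2.ind with
      | _ x y =>
        simp only [mk_mem_missingEdges, mem_erase] at he ⊢
        tauto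
    · simp only [subset_iff, mem_image, mem_filter]
      rintro _ ⟨u, ⟨huV, hvu⟩, rfl⟩
      exact mk_mem_missingEdges.2 ⟨by simp [hv.2.1, hv.2.2], hv.1, huV, hvu⟩
  · simp only [disjoint_right, mem_image, mem_filter]
    rintro _ ⟨u, -, rfl⟩
    simp

theorem exists_compl_adj_of_mem_missingEdges {e : Sym2 α} (he : e ∈ G.missingEdges s t V) :
    ∃ u ∈ V \ {s, t}, ∃ w ∈ V, Gᶜ.Adj u w := by
  induction e using Sym2.ind with
  | _ x y =>
    obtain ⟨hne, hx, hy, hxy⟩ := mk_mem_missingEdges.1 he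
    by_cases hxst : x ∈ ({s, t} : Finset α)
    · by_cases hyst : y ∈ ({s, t} : Finset α)
      · simp only [mem_insert, mem_singleton] at hxst hyst
        rcases hxst with rfl | rfl <;> rcases hyst with rfl | rfl <;>
          simp_all [Sym2.eq_swap]
      · exact ⟨y, mem_sdiff.2 ⟨hy, hyst⟩, x, hx, hxy.symm⟩
    · exact ⟨x, mem_sdiff.2 ⟨hx, hxst⟩, y, hy, hxy⟩

theorem sum_card_compl_adj_le :
    ∑ u ∈ V \ {s, t}, #{w ∈ V | Gᶜ.Adj u w} ≤ 2 * #(G.missingEdges s t V) := by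
  calc ∑ u ∈ V \ {s, t}, #{w ∈ V | Gᶜ.Adj u w}
      ≤ ∑ u ∈ V \ {s, t}, #((G.missingEdges s t V).bipartiteAbove (· ∈ ·) u) := by
        refine sum_le_sum fun u hu => card_le_card_of_injOn (fun w => s(u, w)) ?_ ?_
        · intro w hw
          rw [mem_coe, mem_filter] at hw
          simp only [mem_sdiff, mem_insert, mem_singleton, not_or] at hu
          simp [hu.2.1, hu.2.2, hu.1, hw.1, hw.2]
        · exact fun x _ y _ h => Sym2.congr_right.1 h
    _ = ∑ e ∈ G.missingEdges s t V, #((V \ {s, t}).bipartiteBelow (· ∈ ·) e) :=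
        sum_card_bipartiteAbove_eq_sum_card_bipartiteBelow _
    _ ≤ ∑ e ∈ G.missingEdges s t V, 2 := by
        refine sum_le_sum fun e _ => ?_
        induction e using Sym2.ind with
        | _ x y =>
          refine (card_le_card (t := {x, y}) fun z hz => ?_).trans card_le_two
          simp_all [bipartiteBelow]
    _ = 2 * #(G.missingEdges s t V) := by rw [sum_const, smul_eq_mul, mul_comm]

theorem exists_mem_sdiff_mul_card_compl_adj_le (he : (G.missingEdges s t V).Nonempty) :
    ∃ v ∈ V \ {s, t}, 0 < #{u ∈ V | Gᶜ.Adj v u} ∧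
      (#({u ∈ V | Gᶜ.Adj v u} \ {s, t}) + 1) * #{u ∈ V | Gᶜ.Adj v u} ≤
        2 * #(G.missingEdges s t V) := by
  obtain ⟨e, he⟩ := he
  obtain ⟨u₀, hu₀, w₀, hw₀, hu₀w₀⟩ := exists_compl_adj_of_mem_missingEdges he
  -- among the interior vertices with some non-neighbour, `v` has the fewest; in particular no more
  -- than any of its own interior non-neighbours
  obtain ⟨v, hv, hmin⟩ := exists_min_image {u ∈ V \ {s, t} | #{w ∈ V | Gᶜ.Adj u w} ≠ 0}
    (fun u => #{w ∈ V | Gᶜ.Adj u w})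
    ⟨u₀, mem_filter.2 ⟨hu₀, card_ne_zero.2 ⟨w₀, mem_filter.2 ⟨hw₀, hu₀w₀⟩⟩⟩⟩
  rw [mem_filter] at hv
  set X := {u ∈ V | Gᶜ.Adj v u}
  have hvX : v ∉ X \ {s, t} := fun h => Gᶜ.irrefl (mem_filter.1 (mem_sdiff.1 h).1).2
  have hX : ∀ u ∈ insert v (X \ {s, t}), u ∈ V \ {s, t} ∧ #X ≤ #{w ∈ V | Gᶜ.Adj u w} := by
    intro u hu
    rcases mem_insert.1 hu with rfl | hu
    · exact ⟨hv.1, le_rfl⟩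
    obtain ⟨⟨huV, hvu⟩, hust⟩ := mem_sdiff.1 hu |>.imp_left mem_filter.1
    have huI : u ∈ V \ {s, t} := mem_sdiff.2 ⟨huV, hust⟩
    refine ⟨huI, hmin u (mem_filter.2 ⟨huI, card_ne_zero.2 ⟨v, ?_⟩⟩)⟩
    exact mem_filter.2 ⟨(mem_sdiff.1 hv.1).1, hvu.symm⟩
  refine ⟨v, hv.1, Nat.pos_of_ne_zero hv.2, ?_⟩
  calc (#(X \ {s, t}) + 1) * #X = #(insert v (X \ {s, t})) • #X := by
        rw [card_insert_of_notMem hvX, smul_eq_mul]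
    _ ≤ ∑ u ∈ insert v (X \ {s, t}), #{w ∈ V | Gᶜ.Adj u w} :=
        card_nsmul_le_sum _ _ _ fun u hu => (hX u hu).2
    _ ≤ ∑ u ∈ V \ {s, t}, #{w ∈ V | Gᶜ.Adj u w} :=
        sum_le_sum_of_subset fun u hu => (hX u hu).1
    _ ≤ 2 * #(G.missingEdges s t V) := sum_card_compl_adj_le

theorem exists_mem_sdiff_card_missingEdges_erase_lt (hst : s ≠ t) (hV : 5 ≤ #V)
    (hm : #(G.missingEdges s t V) + 4 ≤ #V) :
    ∃ v ∈ V \ {s, t}, #(G.missingEdges s t (V.erase v)) + 4 < #V ∧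
      #({u ∈ V | Gᶜ.Adj v u}.erase s) + #({u ∈ V | Gᶜ.Adj v u}.erase t) + 3 ≤ #V := by
  simp only [card_erase_add_card_erase hst]
  rcases (G.missingEdges s t V).eq_empty_or_nonempty with hm0 | hne
  · obtain ⟨v, hv⟩ : (V \ {s, t}).Nonempty := by
      rw [← card_pos]
      have := card_le_card_sdiff_add_card (s := V) (t := {s, t})
      have := card_le_two (a := s) (b := t)
      omega
    have hdrop := card_missingEdges_erase_add_le (G := G) hv
    have := card_le_card (sdiff_subset (s := {u ∈ V | Gᶜ.Adj v u}) (t := {s, t}))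
    rw [hm0, card_empty] at hdrop
    exact ⟨v, hv, by omega, by omega⟩
  obtain ⟨v, hv, hXpos, hsum⟩ := exists_mem_sdiff_mul_card_compl_adj_le hne
  have hdrop := card_missingEdges_erase_add_le (G := G) hv
  have hNX := card_le_card (sdiff_subset (s := {u ∈ V | Gᶜ.Adj v u}) (t := {s, t}))
  have hXN : #{u ∈ V | Gᶜ.Adj v u} ≤ #({u ∈ V | Gᶜ.Adj v u} \ {s, t}) + 2 :=
    card_le_card_sdiff_add_card.trans (by gcongr; exact card_le_two)
  exact ⟨v, hv, by omega, by nlinarith⟩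

theorem exists_isPath_support_toFinset_eq_of_card_eq_four (hst : s ≠ t) (hs : s ∈ V) (ht : t ∈ V)
    (hV : #V = 4) (hm : G.missingEdges s t V = ∅) :
    ∃ p : G.Walk s t, p.IsPath ∧ p.support.toFinset = V := by
  have hpair : {s, t} ⊆ V := insert_subset hs (singleton_subset_iff.2 ht)
  obtain ⟨a, b, hab, hI⟩ := card_eq_two.1 <| show #(V \ {s, t}) = 2 by
    rw [card_sdiff_of_subset hpair, hV, card_pair hst]
  have hadj : ∀ x ∈ V, ∀ y ∈ V, x ≠ y → s(x, y) ≠ s(s, t) → G.Adj x y := by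
    intro x hx y hy hxy hne
    by_contra h
    have := mk_mem_missingEdges.2 ⟨hne, hx, hy, (G.compl_adj x y).2 ⟨hxy, h⟩⟩
    simp [hm] at this
  have ha : a ∈ V \ {s, t} := hI ▸ mem_insert_self a {b}
  have hb : b ∈ V \ {s, t} := hI ▸ mem_insert_of_mem (mem_singleton_self b)
  simp only [mem_sdiff, mem_insert, mem_singleton, not_or] at ha hb
  refine ⟨.cons (hadj s hs a ha.1 (Ne.symm ha.2.1) (by simp [ha.2.2, hst]))
    (.cons (hadj a ha.1 b hb.1 hab (by simp [ha.2.1, ha.2.2]))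
    (.cons (hadj b hb.1 t ht hb.2.2 (by simp [hb.2.1, Ne.symm hst])) .nil)), ?_, ?_⟩
  · simp [Walk.isPath_def, hst, hab, Ne.symm ha.2.1, Ne.symm hb.2.1, ha.2.2, hb.2.2]
  · calc _ = {a, b} ∪ {s, t} := by
          ext x
          simp only [Walk.support_cons, Walk.support_nil, List.toFinset_cons, List.toFinset_nil,
            mem_insert, mem_singleton, mem_union, insert_empty]
          tauto
      _ = V := by rw [← hI, sdiff_union_of_subset hpair]

theorem exists_isPath_support_toFinset_eq (hst : s ≠ t) (hs : s ∈ V) (ht : t ∈ V)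
    (hm : #(G.missingEdges s t V) + 4 ≤ #V) :
    ∃ p : G.Walk s t, p.IsPath ∧ p.support.toFinset = V := by
  induction V using Finset.strongInduction with
  | H V ih =>
  rcases (show #V = 4 ∨ 5 ≤ #V by omega) with hV | hV
  · exact exists_isPath_support_toFinset_eq_of_card_eq_four hst hs ht hV
      (card_eq_zero.1 (by omega))
  obtain ⟨v, hv, hmv, hX⟩ := exists_mem_sdiff_card_missingEdges_erase_lt hst hV hm
  simp only [mem_sdiff, mem_insert, mem_singleton, not_or] at hv
  obtain ⟨p, hp, hpV⟩ := ih (V.erase v) (erase_ssubset hv.1) (mem_erase.2 ⟨Ne.symm hv.2.1, hs⟩)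
    (mem_erase.2 ⟨Ne.symm hv.2.2, ht⟩) (by rw [card_erase_of_mem hv.1]; omega)
  have hlen : p.length + 2 = #V := by
    rw [← card_erase_add_one hv.1, ← hpV, List.toFinset_card_of_nodup hp.support_nodup,
      Walk.length_support]
  obtain ⟨d, hd, hfst, hsnd⟩ := hp.exists_dart_fst_notMem_snd_notMem {u ∈ V | Gᶜ.Adj v u} (by omega)
  have hadj : ∀ x ∈ p.support, x ∉ {u ∈ V | Gᶜ.Adj v u} → G.Adj v x := by
    intro x hx hxX
    rw [← List.mem_toFinset, hpV, mem_erase] at hx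
    simpa [compl_adj, hx.2, Ne.symm hx.1] using hxX
  obtain ⟨q, hq, hqV⟩ := hp.exists_isPath_support_toFinset_eq_insert
    (by rw [← List.mem_toFinset, hpV]; exact notMem_erase v V) hd
    (hadj _ (p.dart_fst_mem_support_of_mem_darts hd) hfst)
    (hadj _ (p.dart_snd_mem_support_of_mem_darts hd) hsnd)
  exact ⟨q, hq, by rw [hqV, hpV, insert_erase hv.1]⟩

end SimpleGraph

/-- For every `n ≥ 4`, the complete graph `K_n` remains Hamiltonian-connected after deleting
any set of at most `n - 4` edges. -/
theorem stmt0 (n : ℕ) (hn : 4 ≤ n) (F : Finset (Sym2 (Fin n))) (hF : F.card ≤ n - 4)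
    (s t : Fin n) (hst : s ≠ t) :
    ∃ p : ((⊤ : SimpleGraph (Fin n)).deleteEdges ↑F).Walk s t, p.IsHamiltonian := by
  classical
  have hmF : ((⊤ : SimpleGraph (Fin n)).deleteEdges ↑F).missingEdges s t univ ⊆ F := by
    intro e he
    induction e using Sym2.ind with
    | _ x y =>
      obtain ⟨hxy, hxyF⟩ := (compl_adj _ _ _).1 (mk_mem_missingEdges.1 he).2.2.2
      simpa [hxy] using hxyF
  have hm : #(((⊤ : SimpleGraph (Fin n)).deleteEdges ↑F).missingEdges s t univ) + 4
      ≤ #(univ : Finset (Fin n)) := by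
    have := card_le_card hmF
    rw [card_fin]
    omega
  obtain ⟨p, hp, hpV⟩ := exists_isPath_support_toFinset_eq hst (mem_univ s) (mem_univ t) hm
  exact ⟨p, hp.isHamiltonian_iff.2 fun w => by rw [← List.mem_toFinset, hpV]; exact mem_univ w⟩
end

section
/- For n ≥ 4 with n ≠ 7, for any edge set F of K_n with |F| ≤ n−4 and any four distinct vertices s₁, s₂, t₁, t₂, the graph K_n − F contains two vertex-disjoint paths, one from s₁ to t₁ and one from s₂ to t₂, that together cover all n vertices. -/
open SimpleGraph

/-- A paired 2-disjoint path cover of `G` for sources `s₁, s₂` and sinks `t₁, t₂`: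
two vertex-disjoint paths `s₁ → t₁` and `s₂ → t₂` covering all vertices of `G`. -/
def HasPaired2DPC {V : Type*} (G : SimpleGraph V) (s₁ t₁ s₂ t₂ : V) : Prop :=
  ∃ (p : G.Walk s₁ t₁) (q : G.Walk s₂ t₂), p.IsPath ∧ q.IsPath ∧
    (∀ v, v ∈ p.support → v ∉ q.support) ∧ (∀ v, v ∈ p.support ∨ v ∈ q.support)

/-!
Induction on the number of vertices. Let `v` be a non-terminal vertex of maximum fault degree
`d`. If `d` is small, cover the graph without `v` and reinsert `v` between two consecutive
non-faulty neighbours on one of the paths, which exist by pigeonhole. If `d` is large, delete `v`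
together with a non-faulty neighbour `g₂` and let another non-faulty neighbour `g₁` inherit the
faults of `g₂`; in a cover of the smaller graph, `g₁` can then be replaced by `g₁ v g₂`. If all
non-faulty neighbours of `v` are terminals, two of them form a terminal pair, which is joined
through `v`, and the other pair is joined by a Hamiltonian path of the rest; Hamiltonian paths
between prescribed ends are constructed by the same induction.
-/

open Finset

theorem List.exists_consecutive_not_of_countP {α : Type*} (p : α → Prop) [DecidablePred p] :
    ∀ {l : List α}, 2 * l.countP (fun a => decide (p a)) + 1 < l.length →
      ∃ l₁ a b l₂, l = l₁ ++ a :: b :: l₂ ∧ ¬p a ∧ ¬p b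
  | [], h | [_], h => by simp at h
  | a :: b :: t, h => by
    by_cases ha : p a
    · have h' : 2 * (b :: t).countP (fun a => decide (p a)) + 1 < (b :: t).length := by
        simp only [List.countP_cons, List.length_cons, ha, decide_true, ite_true] at h ⊢
        omega
      obtain ⟨l₁, c, d, l₂, hsplit, hc, hd⟩ := exists_consecutive_not_of_countP p h'
      exact ⟨a :: l₁, c, d, l₂, by rw [hsplit]; rfl, hc, hd⟩
    by_cases hb : p b
    · have h' : 2 * t.countP (fun a => decide (p a)) + 1 < t.length := by
        simp only [List.countP_cons, List.length_cons, ha, hb, decide_true, decide_false,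
          ite_true, Bool.false_eq_true, ite_false] at h
        omega
      obtain ⟨l₁, c, d, l₂, rfl, hc, hd⟩ := exists_consecutive_not_of_countP p h'
      exact ⟨a :: b :: l₁, c, d, l₂, rfl, hc, hd⟩
    exact ⟨[], a, b, t, rfl, ha, hb⟩

theorem List.Nodup.countP_mem_le_card {α : Type*} [DecidableEq α] {l : List α} (hl : l.Nodup)
    (B : Finset α) : l.countP (· ∈ B) ≤ #B := by
  rw [List.countP_eq_length_filter, ← List.toFinset_card_of_nodup (hl.filter _)]
  exact card_le_card fun u hu => by simpa using (List.mem_filter.1 (List.mem_toFinset.1 hu)).2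

theorem List.nodup_four_iff {α : Type*} {a b c d : α} :
    [a, b, c, d].Nodup ↔ a ≠ b ∧ a ≠ c ∧ a ≠ d ∧ b ≠ c ∧ b ≠ d ∧ c ≠ d := by
  simp [and_assoc]

theorem Finset.card_eq_four_of_nodup {α : Type*} [DecidableEq α] {a b c d : α}
    (h : [a, b, c, d].Nodup) : #({a, b, c, d} : Finset α) = 4 := by
  simpa using List.toFinset_card_of_nodup h

theorem Finset.mem_and_mem_or_mem_and_mem {α : Type*} [DecidableEq α] {X : Finset α} {a b c d : α}
    (hX : X ⊆ {a, b, c, d}) (h3 : 3 ≤ #X) : (a ∈ X ∧ c ∈ X) ∨ (b ∈ X ∧ d ∈ X) := by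
  by_contra! h
  obtain ⟨p, hp, hpX⟩ : ∃ p ∈ ({a, c} : Finset α), p ∉ X := by
    by_cases ha : a ∈ X
    exacts [⟨c, by simp, h.1 ha⟩, ⟨a, by simp, ha⟩]
  obtain ⟨q, hq, hqX⟩ : ∃ q ∈ ({b, d} : Finset α), q ∉ X := by
    by_cases hb : b ∈ X
    exacts [⟨d, by simp, h.2 hb⟩, ⟨b, by simp, hb⟩]
  have : X ⊆ ({a, c} : Finset α).erase p ∪ ({b, d} : Finset α).erase q := fun u hu => by
    have := hX hu
    simp only [mem_union, mem_erase, mem_insert, mem_singleton] at this ⊢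
    grind
  have := (card_le_card this).trans (card_union_le _ _)
  have := card_erase_of_mem hp
  have := card_erase_of_mem hq
  have := card_le_two (a := a) (b := c)
  have := card_le_two (a := b) (b := d)
  omega

variable {V : Type*}

-- Paths are handled as vertex lists, which are easier to splice than walks.
structure IsListPath (G : SimpleGraph V) (x y : V) (l : List V) : Prop where
  isChain : l.IsChain G.Adj
  nodup : l.Nodup
  head? : l.head? = some x
  getLast? : l.getLast? = some y

namespace IsListPath

variable {G G' : SimpleGraph V} {x y : V} {l : List V}

theorem reverse (h : IsListPath G x y l) : IsListPath G y x l.reverse :=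
  ⟨List.isChain_reverse.2 (h.isChain.imp fun _ _ hab => hab.symm), List.nodup_reverse.2 h.nodup,
    by simpa using h.getLast?, by simpa using h.head?⟩

theorem mono (hle : G ≤ G') (h : IsListPath G x y l) : IsListPath G' x y l :=
  ⟨h.isChain.imp fun _ _ hab => hle hab, h.nodup, h.head?, h.getLast?⟩

theorem exists_walk (h : IsListPath G x y l) : ∃ p : G.Walk x y, p.IsPath ∧ p.support = l := by
  obtain ⟨hc, hn, hh, hl⟩ := h
  have hne : l ≠ [] := by rintro rfl; simp at hh
  have hx : l.head hne = x := by simpa [List.head?_eq_some_head hne] using hh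
  have hy : l.getLast hne = y := by simpa [List.getLast?_eq_some_getLast hne] using hl
  refine ⟨(Walk.ofSupport l hne hc).copy hx hy, ?_, by simp⟩
  exact Walk.IsPath.mk' (by simpa using hn)

theorem splice {l₁ l₂ m : List V} {a b : V}
    (h : IsListPath G x y (l₁ ++ a :: b :: l₂)) (hm : (a :: m ++ [b]).IsChain G.Adj)
    (hmn : m.Nodup) (hdisj : ∀ u ∈ m, u ∉ l₁ ++ a :: b :: l₂) :
    IsListPath G x y (l₁ ++ a :: (m ++ b :: l₂)) := by
  obtain ⟨hc, hn, hh, hl⟩ := h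
  refine ⟨?_, ?_, ?_, ?_⟩
  · rw [List.isChain_append_cons_cons] at hc
    rw [List.isChain_split, show a :: (m ++ b :: l₂) = (a :: m) ++ b :: l₂ from rfl,
      List.isChain_split (l₁ := a :: m)]
    exact ⟨hc.1, hm, hc.2.2⟩
  · have hp : (l₁ ++ a :: (m ++ b :: l₂)).Perm (m ++ (l₁ ++ a :: b :: l₂)) := by
      simpa using List.perm_append_comm_assoc (l₁ ++ [a]) m (b :: l₂)
    rw [hp.nodup_iff, List.nodup_append]
    exact ⟨hmn, hn, fun u hu w hw huw => hdisj u hu (huw ▸ hw)⟩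
  · rw [← hh]; cases l₁ <;> simp
  · rw [← hl, show l₁ ++ a :: (m ++ b :: l₂) = (l₁ ++ a :: m) ++ b :: l₂ by simp,
      show l₁ ++ a :: b :: l₂ = (l₁ ++ [a]) ++ b :: l₂ by simp, List.getLast?_append_cons,
      List.getLast?_append_cons]

theorem exists_insert [DecidableEq V] {v : V} {B : Finset V} (h : IsListPath G x y l)
    (hv : v ∉ l) (hB : ∀ u ∈ l, u ∉ B → G.Adj v u) (hcard : 2 * #B + 1 < l.length) :
    ∃ l', IsListPath G x y l' ∧ ∀ u, u ∈ l' ↔ u = v ∨ u ∈ l := by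
  have hcount := h.nodup.countP_mem_le_card B
  obtain ⟨l₁, a, b, l₂, rfl, ha, hb⟩ := List.exists_consecutive_not_of_countP (· ∈ B) (l := l)
    (by omega)
  refine ⟨_, h.splice (m := [v]) ?_ (List.nodup_singleton v) (by simpa using hv), fun u => ?_⟩
  · simpa using ⟨(hB a (by simp) ha).symm, hB b (by simp) hb⟩
  · simp only [List.mem_append, List.mem_cons]
    tauto

theorem expand_of_next {l₁ l₂ : List V} {v g₁ g₂ c : V}
    (h : IsListPath G' x y (l₁ ++ g₁ :: c :: l₂)) (hle : G' ≤ G)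
    (hv : v ∉ l₁ ++ g₁ :: c :: l₂) (hg₂ : g₂ ∉ l₁ ++ g₁ :: c :: l₂)
    (hinherit : G'.Adj g₁ c → G.Adj g₂ c) (h₁ : G.Adj g₁ v) (h₂ : G.Adj v g₂) :
    IsListPath G x y (l₁ ++ g₁ :: ([v, g₂] ++ c :: l₂)) := by
  have hg₁c : G'.Adj g₁ c := (List.isChain_append_cons_cons.1 h.isChain).2.1
  refine (h.mono hle).splice ?_ (by simpa using h₂.ne) ?_
  · simpa using ⟨h₁, h₂, hinherit hg₁c⟩
  · intro u hu
    simp only [List.mem_cons, List.not_mem_nil, or_false] at hu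
    rcases hu with rfl | rfl <;> assumption

theorem exists_expand {v g₁ g₂ : V} (h : IsListPath G' x y l) (hxy : x ≠ y)
    (hle : G' ≤ G) (hg₁ : g₁ ∈ l) (hv : v ∉ l) (hg₂ : g₂ ∉ l)
    (hinherit : ∀ u ∈ l, G'.Adj g₁ u → G.Adj g₂ u) (h₁ : G.Adj g₁ v) (h₂ : G.Adj v g₂) :
    ∃ l', IsListPath G x y l' ∧ ∀ u, u ∈ l' ↔ u = v ∨ u = g₂ ∨ u ∈ l := by
  obtain ⟨l₁, l₂, rfl⟩ := List.append_of_mem hg₁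
  cases l₂ with
  | cons c t =>
    refine ⟨_, h.expand_of_next hle hv hg₂ (hinherit c (by simp)) h₁ h₂, fun u => ?_⟩
    simp only [List.mem_append, List.mem_cons]
    tauto
  | nil =>
    -- `g₁ = y` has no successor, so expand the reversed path
    obtain rfl | ⟨l₀, c, rfl⟩ := List.eq_nil_or_concat' l₁
    · exact absurd (by simpa using h.head?.symm.trans h.getLast?) hxy
    have hrev : IsListPath G' y x ([] ++ g₁ :: c :: l₀.reverse) := by simpa using h.reverse
    have hmem : ∀ u, u ∈ [] ++ g₁ :: c :: l₀.reverse ↔ u ∈ l₀ ++ [c] ++ [g₁] := fun u => by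
      simp only [List.nil_append, List.mem_cons, List.mem_reverse, List.mem_append]
      tauto
    refine ⟨_, (hrev.expand_of_next hle (by rwa [hmem]) (by rwa [hmem])
      (hinherit c (by simp)) h₁ h₂).reverse, fun u => ?_⟩
    simp only [List.mem_reverse, List.mem_append, List.mem_cons, List.nil_append,
      List.cons_append]
    tauto

end IsListPath

def HamPathOn (G : SimpleGraph V) (S : Finset V) (x y : V) : Prop :=
  ∃ l, IsListPath G x y l ∧ ∀ u, u ∈ l ↔ u ∈ S

namespace HamPathOn

variable {G G' : SimpleGraph V} {S : Finset V} {x y : V}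

theorem left_mem : HamPathOn G S x y → x ∈ S
  | ⟨_, hl, hmem⟩ => (hmem x).1 (List.mem_of_mem_head? hl.head?)

theorem right_mem : HamPathOn G S x y → y ∈ S
  | ⟨_, hl, hmem⟩ => (hmem y).1 (List.mem_of_mem_getLast? hl.getLast?)

theorem mono (hle : G ≤ G') : HamPathOn G S x y → HamPathOn G' S x y
  | ⟨l, hl, hmem⟩ => ⟨l, hl.mono hle, hmem⟩

variable [DecidableEq V]

theorem pair (hxy : G.Adj x y) : HamPathOn G {x, y} x y :=
  ⟨[x, y], ⟨by simpa using hxy, by simpa using hxy.ne, rfl, rfl⟩, by simp⟩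

theorem triple {w : V} (hxw : G.Adj x w) (hwy : G.Adj w y) (hxy : x ≠ y) :
    HamPathOn G {x, w, y} x y :=
  ⟨[x, w, y], ⟨by simpa using ⟨hxw, hwy⟩, by simp [hxw.ne, hwy.ne, hxy], rfl, rfl⟩, by simp⟩

theorem insert_vertex {v : V} {B : Finset V} (h : HamPathOn G S x y) (hv : v ∉ S)
    (hB : ∀ u ∈ S, u ∉ B → G.Adj v u) (hcard : 2 * #B + 2 ≤ #S) :
    HamPathOn G (insert v S) x y := by
  obtain ⟨l, hl, hmem⟩ := h
  have hlen : l.length = #S := by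
    rw [← List.toFinset_card_of_nodup hl.nodup]
    congr 1
    ext u
    simp [hmem]
  obtain ⟨l', hl', hmem'⟩ := hl.exists_insert (by rwa [hmem])
    (fun u hu => hB u ((hmem u).1 hu)) (by omega)
  exact ⟨l', hl', fun u => by rw [hmem', hmem, Finset.mem_insert]⟩

theorem expand {v g₁ g₂ : V} (h : HamPathOn G' S x y) (hxy : x ≠ y) (hle : G' ≤ G)
    (hg₁ : g₁ ∈ S) (hv : v ∉ S) (hg₂ : g₂ ∉ S) (hinherit : ∀ u ∈ S, G'.Adj g₁ u → G.Adj g₂ u)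
    (h₁ : G.Adj g₁ v) (h₂ : G.Adj v g₂) : HamPathOn G (insert v (insert g₂ S)) x y := by
  obtain ⟨l, hl, hmem⟩ := h
  obtain ⟨l', hl', hmem'⟩ := hl.exists_expand hxy hle ((hmem g₁).2 hg₁) (by rwa [hmem])
    (by rwa [hmem]) (fun u hu => hinherit u ((hmem u).1 hu)) h₁ h₂
  exact ⟨l', hl', fun u => by simp [hmem', hmem]⟩

end HamPathOn

abbrev faultGraph (F : Finset (Sym2 V)) : SimpleGraph V := (⊤ : SimpleGraph V).deleteEdges F

def FaultsWithin (F : Finset (Sym2 V)) (S T : Finset V) : Prop :=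
  ∀ a ∈ S, ∀ b ∈ S, a ≠ b → s(a, b) ∈ F → a ∈ T ∧ b ∈ T

section FaultGraph

variable {F : Finset (Sym2 V)} {S T : Finset V} {u v : V}

theorem faultGraph_adj : (faultGraph F).Adj u v ↔ u ≠ v ∧ s(u, v) ∉ F := by
  simp [faultGraph]

theorem FaultsWithin.adj (h : FaultsWithin F S T) (hu : u ∈ S) (hv : v ∈ S) (huv : u ≠ v)
    (huT : u ∉ T) : (faultGraph F).Adj u v :=
  faultGraph_adj.2 ⟨huv, fun hf => huT (h u hu v hv huv hf).1⟩

theorem FaultsWithin.mono {S' T' : Finset V} (h : FaultsWithin F S T) (hS : S' ⊆ S)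
    (hT : ∀ a ∈ S', a ∈ T → a ∈ T') : FaultsWithin F S' T' := fun a ha b hb hab hf =>
  have := h a (hS ha) b (hS hb) hab hf
  ⟨hT a ha this.1, hT b hb this.2⟩

end FaultGraph

variable [DecidableEq V]

def PairedDPCOn (G : SimpleGraph V) (S : Finset V) (s₁ t₁ s₂ t₂ : V) : Prop :=
  ∃ A B : Finset V, Disjoint A B ∧ A ∪ B = S ∧ HamPathOn G A s₁ t₁ ∧ HamPathOn G B s₂ t₂

namespace PairedDPCOn

variable {G G' : SimpleGraph V} {S : Finset V} {s₁ t₁ s₂ t₂ : V}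

theorem symm : PairedDPCOn G S s₁ t₁ s₂ t₂ → PairedDPCOn G S s₂ t₂ s₁ t₁
  | ⟨A, B, hAB, hS, h₁, h₂⟩ => ⟨B, A, hAB.symm, by rw [union_comm, hS], h₂, h₁⟩

theorem of_subset {A : Finset V} (hA : A ⊆ S) (h₁ : HamPathOn G A s₁ t₁)
    (h₂ : HamPathOn G (S \ A) s₂ t₂) : PairedDPCOn G S s₁ t₁ s₂ t₂ :=
  ⟨A, S \ A, disjoint_sdiff, union_sdiff_of_subset hA, h₁, h₂⟩

theorem insert_vertex {v : V} {B : Finset V} (h : PairedDPCOn G S s₁ t₁ s₂ t₂) (hv : v ∉ S)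
    (hB : ∀ u ∈ S, u ∉ B → G.Adj v u) (hcard : 2 * #B + 3 ≤ #S) :
    PairedDPCOn G (insert v S) s₁ t₁ s₂ t₂ := by
  obtain ⟨A₁, A₂, hdisj, rfl, h₁, h₂⟩ := h
  have hsplit : #(A₁ ∩ B) + #(A₂ ∩ B) ≤ #B := by
    rw [← card_union_of_disjoint (hdisj.mono inter_subset_left inter_subset_left)]
    exact card_le_card (union_subset inter_subset_right inter_subset_right)
  have hcard₁₂ := card_union_of_disjoint hdisj
  have hB' : ∀ A ⊆ A₁ ∪ A₂, ∀ u ∈ A, u ∉ A ∩ B → G.Adj v u := fun A hA u hu huB =>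
    hB u (hA hu) fun h => huB (mem_inter.2 ⟨hu, h⟩)
  rw [mem_union, not_or] at hv
  by_cases hsmall : 2 * #(A₁ ∩ B) + 2 ≤ #A₁
  · refine ⟨insert v A₁, A₂, disjoint_insert_left.2 ⟨hv.2, hdisj⟩, insert_union _ _ _,
      h₁.insert_vertex hv.1 (hB' _ subset_union_left) hsmall, h₂⟩
  · refine ⟨A₁, insert v A₂, disjoint_insert_right.2 ⟨hv.1, hdisj⟩,
      union_insert _ _ _, h₁, h₂.insert_vertex hv.2 (hB' _ subset_union_right) (by omega)⟩

theorem expand {v g₁ g₂ : V} (h : PairedDPCOn G' S s₁ t₁ s₂ t₂) (h₁₁ : s₁ ≠ t₁)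
    (h₂₂ : s₂ ≠ t₂) (hle : G' ≤ G) (hg₁ : g₁ ∈ S) (hv : v ∉ S) (hg₂ : g₂ ∉ S)
    (hinherit : ∀ u ∈ S, G'.Adj g₁ u → G.Adj g₂ u) (h₁ : G.Adj g₁ v) (h₂ : G.Adj v g₂) :
    PairedDPCOn G (insert v (insert g₂ S)) s₁ t₁ s₂ t₂ := by
  obtain ⟨A₁, A₂, hdisj, rfl, hA₁, hA₂⟩ := h
  simp only [mem_union, not_or] at hv hg₂
  rcases mem_union.1 hg₁ with hg₁ | hg₁
  · refine ⟨_, A₂, ?_, by simp only [insert_union], hA₁.expand h₁₁ hle hg₁ hv.1 hg₂.1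
      (fun u hu => hinherit u (mem_union_left _ hu)) h₁ h₂, hA₂.mono hle⟩
    simp [disjoint_insert_left, hv.2, hg₂.2, hdisj]
  · refine ⟨A₁, _, ?_, by simp only [union_insert], hA₁.mono hle, hA₂.expand h₂₂ hle hg₁ hv.2
      hg₂.2 (fun u hu => hinherit u (mem_union_right _ hu)) h₁ h₂⟩
    simp [disjoint_insert_right, hv.1, hg₂.1, hdisj]

theorem hasPaired2DPC [Fintype V] (h : PairedDPCOn G univ s₁ t₁ s₂ t₂) :
    HasPaired2DPC G s₁ t₁ s₂ t₂ := by
  obtain ⟨A, B, hAB, hAll, ⟨l₁, hl₁, hmem₁⟩, ⟨l₂, hl₂, hmem₂⟩⟩ := h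
  obtain ⟨p, hp, rfl⟩ := hl₁.exists_walk
  obtain ⟨q, hq, rfl⟩ := hl₂.exists_walk
  refine ⟨p, q, hp, hq, fun u hu hu' => disjoint_left.1 hAB ((hmem₁ u).1 hu) ((hmem₂ u).1 hu'),
    fun u => ?_⟩
  rw [hmem₁, hmem₂, ← mem_union, hAll]
  exact mem_univ u

end PairedDPCOn

def faultNeighborFinset (F : Finset (Sym2 V)) (S : Finset V) (u : V) : Finset V :=
  {w ∈ S.erase u | s(u, w) ∈ F}

-- Once `g₁` has inherited the faults of `g₂`, every path neighbour of `g₁` is also a non-faulty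
-- neighbour of `g₂`, so that `g₁` can be replaced by `g₁ v g₂` on the path.
def inheritFaults (F : Finset (Sym2 V)) (S : Finset V) (g₁ g₂ : V) : Finset (Sym2 V) :=
  F ∪ (faultNeighborFinset F S g₂).image (fun w => s(g₁, w))

section Faults

variable {F : Finset (Sym2 V)} {S T : Finset V} {u v : V}

theorem faultGraph_adj_of_not_mem_faultNeighborFinset (hu : u ∈ S) (huv : u ≠ v)
    (h : u ∉ faultNeighborFinset F S v) : (faultGraph F).Adj v u :=
  faultGraph_adj.2 ⟨huv.symm, fun hf => h (by simp [faultNeighborFinset, hu, huv, hf])⟩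

theorem faultNeighborFinset_mono {S' : Finset V} (h : S' ⊆ S) :
    faultNeighborFinset F S' u ⊆ faultNeighborFinset F S u :=
  filter_subset_filter _ (erase_subset_erase u h)

theorem card_faultNeighborFinset_add_card_le (hv : v ∈ S) :
    #(faultNeighborFinset F S v) + #(F ∩ (S.erase v).sym2) ≤ #(F ∩ S.sym2) := by
  have hinj : Set.InjOn (fun w => s(v, w)) (faultNeighborFinset F S v) :=
    fun a _ b _ h => Sym2.congr_right.1 h
  rw [← card_image_of_injOn hinj, ← card_union_of_disjoint]
  · refine card_le_card (union_subset ?_ (inter_subset_inter_left (sym2_mono (erase_subset v S))))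
    intro e he
    obtain ⟨w, hw, rfl⟩ := mem_image.1 he
    simp only [faultNeighborFinset, mem_filter, mem_erase] at hw
    exact mem_inter.2 ⟨hw.2, mk_mem_sym2_iff.2 ⟨hv, hw.1.2⟩⟩
  · refine disjoint_left.2 fun e he he' => ?_
    obtain ⟨w, -, rfl⟩ := mem_image.1 he
    simpa using (mk_mem_sym2_iff.1 (mem_inter.1 he').2).1

theorem card_faultNeighborFinset_add_card_good (hv : v ∈ S) :
    #(faultNeighborFinset F S v) + #{w ∈ S.erase v | s(v, w) ∉ F} + 1 = #S := by
  rw [faultNeighborFinset, card_filter_add_card_filter_not, card_erase_add_one hv]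

theorem exists_good_neighbor_not_mem (hv : v ∈ S) {X : Finset V}
    (h : #(faultNeighborFinset F S v) + #X + 2 ≤ #S) :
    ∃ g ∈ S.erase v, g ∉ X ∧ s(v, g) ∉ F := by
  have hgood := card_faultNeighborFinset_add_card_good (F := F) hv
  have := le_card_sdiff X {w ∈ S.erase v | s(v, w) ∉ F}
  obtain ⟨g, hg⟩ : ({w ∈ S.erase v | s(v, w) ∉ F} \ X).Nonempty := card_pos.1 (by omega)
  simp only [mem_sdiff, mem_filter] at hg
  exact ⟨g, hg.1.1, hg.2, hg.1.2⟩

theorem card_inheritFaults_inter_add_le {g₁ g₂ : V} (hv : v ∈ S) (hg₂ : g₂ ∈ S.erase v) :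
    #(inheritFaults F (S.erase v) g₁ g₂ ∩ ((S.erase v).erase g₂).sym2) +
      #(faultNeighborFinset F S v) ≤ #(F ∩ S.sym2) := by
  have hsub : inheritFaults F (S.erase v) g₁ g₂ ∩ ((S.erase v).erase g₂).sym2 ⊆
      F ∩ ((S.erase v).erase g₂).sym2 ∪
        (faultNeighborFinset F (S.erase v) g₂).image (fun w => s(g₁, w)) := by
    intro e he
    simp only [inheritFaults, mem_inter, mem_union] at he ⊢
    tauto
  have := (card_le_card hsub).trans (card_union_le _ _)
  have := card_image_le (s := faultNeighborFinset F (S.erase v) g₂) (f := fun w => s(g₁, w))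
  have := card_faultNeighborFinset_add_card_le (F := F) hg₂
  have := card_faultNeighborFinset_add_card_le (F := F) hv
  omega

theorem faultGraph_inheritFaults_adj {g₁ g₂ : V} (hu : u ∈ S.erase g₂)
    (h : (faultGraph (inheritFaults F S g₁ g₂)).Adj g₁ u) : (faultGraph F).Adj g₂ u := by
  refine faultGraph_adj.2 ⟨(ne_of_mem_erase hu).symm, fun hf => (faultGraph_adj.1 h).2 ?_⟩
  exact mem_union_right _ (mem_image.2 ⟨u, mem_filter.2 ⟨hu, hf⟩, rfl⟩)

theorem exists_faultNeighborFinset_nonempty (h : ¬FaultsWithin F S T) :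
    ∃ v ∈ S, v ∉ T ∧ (faultNeighborFinset F S v).Nonempty := by
  simp only [FaultsWithin, not_forall, not_and_or] at h
  obtain ⟨a, ha, b, hb, hab, hf, haT | hbT⟩ := h
  · exact ⟨a, ha, haT, b, by simp [faultNeighborFinset, hb, hab.symm, hf]⟩
  · exact ⟨b, hb, hbT, a, by simp [faultNeighborFinset, ha, hab, Sym2.eq_swap, hf]⟩

end Faults

section Hamiltonian

variable {F : Finset (Sym2 V)} {S : Finset V} {v x y : V}

theorem HamPathOn.of_erase (h : HamPathOn (faultGraph F) (S.erase v) x y) (hv : v ∈ S)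
    (hd : 2 * #(faultNeighborFinset F S v) + 3 ≤ #S) : HamPathOn (faultGraph F) S x y := by
  have := h.insert_vertex (B := faultNeighborFinset F S v) (notMem_erase v S)
    (fun u hu hB => faultGraph_adj_of_not_mem_faultNeighborFinset (mem_of_mem_erase hu)
      (ne_of_mem_erase hu) hB) (by rw [card_erase_of_mem hv]; omega)
  rwa [insert_erase hv] at this

theorem HamPathOn.of_inheritFaults {g₁ g₂ : V}
    (h : HamPathOn (faultGraph (inheritFaults F (S.erase v) g₁ g₂)) ((S.erase v).erase g₂) x y)
    (hxy : x ≠ y) (hv : v ∈ S) (hg₂ : g₂ ∈ S.erase v) (hg₁ : g₁ ∈ (S.erase v).erase g₂)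
    (h₁ : s(v, g₁) ∉ F) (h₂ : s(v, g₂) ∉ F) : HamPathOn (faultGraph F) S x y := by
  have := h.expand hxy (deleteEdges_anti (by simp [inheritFaults])) hg₁ (by simp)
    (notMem_erase _ _) (fun u hu => faultGraph_inheritFaults_adj hu)
    (faultGraph_adj.2 ⟨ne_of_mem_erase (mem_of_mem_erase hg₁), by rwa [Sym2.eq_swap]⟩)
    (faultGraph_adj.2 ⟨(ne_of_mem_erase hg₂).symm, h₂⟩)
  rwa [insert_erase hg₂, insert_erase hv] at this

theorem hamPathOn_of_faultsWithin (hx : x ∈ S) (hy : y ∈ S) (hxy : x ≠ y)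
    (hW : FaultsWithin F S {x, y}) (h : s(x, y) ∉ F ∨ 3 ≤ #S) :
    HamPathOn (faultGraph F) S x y := by
  set M := S \ {x, y}
  have hM : ∀ u, u ∈ M.toList ↔ u ∈ S ∧ u ≠ x ∧ u ≠ y := by simp [M]
  have hadj : ∀ a ∈ M.toList, ∀ b ∈ S, a ≠ b → (faultGraph F).Adj a b := fun a ha b hb hab =>
    hW.adj ((hM a).1 ha).1 hb hab (by simp [((hM a).1 ha).2])
  have hnd : (M.toList ++ [y]).Nodup :=
    List.nodup_append.2 ⟨M.nodup_toList, List.nodup_singleton y, by simp [hM]⟩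
  have hpw : (M.toList ++ [y]).Pairwise (faultGraph F).Adj := by
    refine hnd.pairwise_of_forall_ne fun a ha b hb hab => ?_
    simp only [List.mem_append, List.mem_singleton] at ha hb
    rcases ha with ha | rfl
    · exact hadj a ha b (by rcases hb with hb | rfl; exacts [((hM b).1 hb).1, hy]) hab
    · rcases hb with hb | rfl
      · exact (hadj b hb a hy hab.symm).symm
      · exact absurd rfl hab
  refine ⟨x :: (M.toList ++ [y]), ⟨?_, ?_, rfl,
    by rw [← List.cons_append, List.getLast?_append_cons]; rfl⟩, fun u => ?_⟩
  · cases hL : M.toList with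
    | nil =>
      have : #S ≤ 2 := (card_le_card (sdiff_eq_empty_iff_subset.1 (toList_eq_nil.1 hL))).trans
        card_le_two
      simpa using faultGraph_adj.2 ⟨hxy, h.resolve_right (by omega)⟩
    | cons m L =>
      rw [hL] at hpw
      have hm : m ∈ M.toList := by simp [hL]
      exact List.isChain_cons_cons.2 ⟨(hadj m hm x hx ((hM m).1 hm).2.1).symm, hpw.isChain⟩
  · exact List.nodup_cons.2 ⟨by simp [hM, hxy], hnd⟩
  · simp only [List.mem_cons, List.mem_append, hM]
    by_cases hux : u = x <;> by_cases huy : u = y <;> simp_all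

theorem hamPathOn_of_card_faults_le (S : Finset V) (F : Finset (Sym2 V)) (hx : x ∈ S)
    (hy : y ∈ S) (hxy : x ≠ y) (hF : #(F ∩ S.sym2) ≤ #S - 4) :
    HamPathOn (faultGraph F) S x y := by
  induction S using Finset.strongInduction generalizing F with
  | H S ih =>
  by_cases hW : FaultsWithin F S {x, y}
  · refine hamPathOn_of_faultsWithin hx hy hxy hW (or_iff_not_imp_left.2 fun hf => ?_)
    have := card_pos.2 ⟨_, mem_inter.2 ⟨not_not.1 hf, mk_mem_sym2_iff.2 ⟨hx, hy⟩⟩⟩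
    omega
  obtain ⟨v, hv, hvxy, hd⟩ := exists_faultNeighborFinset_nonempty hW
  simp only [mem_insert, mem_singleton, not_or] at hvxy
  have hdrop := card_faultNeighborFinset_add_card_le (F := F) hv
  have hd := hd.card_pos
  by_cases hsmall : 2 * #(faultNeighborFinset F S v) + 3 ≤ #S
  · refine (ih _ (erase_ssubset hv) F (mem_erase.2 ⟨Ne.symm hvxy.1, hx⟩)
      (mem_erase.2 ⟨Ne.symm hvxy.2, hy⟩) ?_).of_erase hv hsmall
    rw [card_erase_of_mem hv]
    omega
  -- `v` has too many faults to be inserted back: merge two of its neighbours instead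
  obtain ⟨g₂, hg₂, hg₂xy, h₂⟩ := exists_good_neighbor_not_mem (F := F) (X := {x, y}) hv
    (by have := card_le_two (a := x) (b := y); omega)
  obtain ⟨g₁, hg₁, hg₁₂, h₁⟩ := exists_good_neighbor_not_mem (F := F) (X := {g₂}) hv
    (by rw [card_singleton]; omega)
  simp only [mem_insert, mem_singleton, not_or] at hg₂xy hg₁₂
  have hmerge := card_inheritFaults_inter_add_le (F := F) (g₁ := g₁) hv hg₂
  refine (ih _ ((erase_ssubset hg₂).trans (erase_ssubset hv)) _ ?_ ?_ ?_).of_inheritFaults hxy hv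
    hg₂ (mem_erase.2 ⟨hg₁₂, hg₁⟩) h₁ h₂
  · exact mem_erase.2 ⟨Ne.symm hg₂xy.1, mem_erase.2 ⟨Ne.symm hvxy.1, hx⟩⟩
  · exact mem_erase.2 ⟨Ne.symm hg₂xy.2, mem_erase.2 ⟨Ne.symm hvxy.2, hy⟩⟩
  · rw [card_erase_of_mem hg₂, card_erase_of_mem hv]
    omega

end Hamiltonian

section PairedDPC

variable {F : Finset (Sym2 V)} {S : Finset V} {v s₁ t₁ s₂ t₂ : V}

theorem PairedDPCOn.of_erase (h : PairedDPCOn (faultGraph F) (S.erase v) s₁ t₁ s₂ t₂)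
    (hv : v ∈ S) (hd : 2 * #(faultNeighborFinset F S v) + 4 ≤ #S) :
    PairedDPCOn (faultGraph F) S s₁ t₁ s₂ t₂ := by
  have := h.insert_vertex (B := faultNeighborFinset F S v) (notMem_erase v S)
    (fun u hu hB => faultGraph_adj_of_not_mem_faultNeighborFinset (mem_of_mem_erase hu)
      (ne_of_mem_erase hu) hB) (by rw [card_erase_of_mem hv]; omega)
  rwa [insert_erase hv] at this

theorem PairedDPCOn.of_inheritFaults {g₁ g₂ : V}
    (h : PairedDPCOn (faultGraph (inheritFaults F (S.erase v) g₁ g₂)) ((S.erase v).erase g₂)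
      s₁ t₁ s₂ t₂)
    (h₁₁ : s₁ ≠ t₁) (h₂₂ : s₂ ≠ t₂) (hv : v ∈ S) (hg₂ : g₂ ∈ S.erase v)
    (hg₁ : g₁ ∈ (S.erase v).erase g₂) (h₁ : s(v, g₁) ∉ F) (h₂ : s(v, g₂) ∉ F) :
    PairedDPCOn (faultGraph F) S s₁ t₁ s₂ t₂ := by
  have := h.expand h₁₁ h₂₂ (deleteEdges_anti (by simp [inheritFaults])) hg₁ (by simp)
    (notMem_erase _ _) (fun u hu => faultGraph_inheritFaults_adj hu)
    (faultGraph_adj.2 ⟨ne_of_mem_erase (mem_of_mem_erase hg₁), by rwa [Sym2.eq_swap]⟩)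
    (faultGraph_adj.2 ⟨(ne_of_mem_erase hg₂).symm, h₂⟩)
  rwa [insert_erase hg₂, insert_erase hv] at this

theorem FaultsWithin.pairedDPCOn_of_hamPathOn {B : Finset V}
    (hW : FaultsWithin F S {s₁, s₂, t₁, t₂}) (hB : B ⊆ S) (hs₂ : s₂ ∈ S) (ht₂ : t₂ ∈ S)
    (hs₂B : s₂ ∉ B) (ht₂B : t₂ ∉ B) (h₂₂ : s₂ ≠ t₂) (h₁ : HamPathOn (faultGraph F) B s₁ t₁)
    (h : s(s₂, t₂) ∉ F ∨ 3 ≤ #S - #B) : PairedDPCOn (faultGraph F) S s₁ t₁ s₂ t₂ := by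
  refine .of_subset hB h₁ (hamPathOn_of_faultsWithin (mem_sdiff.2 ⟨hs₂, hs₂B⟩)
    (mem_sdiff.2 ⟨ht₂, ht₂B⟩) h₂₂ (hW.mono sdiff_subset fun a ha haT => ?_)
    (by rwa [card_sdiff_of_subset hB]))
  have := h₁.left_mem
  have := h₁.right_mem
  simp only [mem_insert, mem_singleton, mem_sdiff] at haT ha ⊢
  grind

theorem pairedDPCOn_of_faultsWithin (hd : [s₁, s₂, t₁, t₂].Nodup) (hT : {s₁, s₂, t₁, t₂} ⊆ S)
    (hW : FaultsWithin F S {s₁, s₂, t₁, t₂}) (hF : #(F ∩ S.sym2) ≤ #S - 4) :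
    PairedDPCOn (faultGraph F) S s₁ t₁ s₂ t₂ := by
  wlog h : s(s₁, t₁) ∉ F ∨ s(s₂, t₂) ∈ F generalizing s₁ t₁ s₂ t₂
  · have hswap : ({s₂, s₁, t₂, t₁} : Finset V) = {s₁, s₂, t₁, t₂} := by
      ext; simp only [mem_insert, mem_singleton]; tauto
    simp only [not_or, not_not] at h
    refine (this (s₁ := s₂) (t₁ := t₂) (s₂ := s₁) (t₂ := t₁) ?_ (hswap ▸ hT) (hswap ▸ hW)
      (.inl h.2)).symm
    obtain ⟨h12, h11, h1t2, h21, h22, htt⟩ := List.nodup_four_iff.1 hd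
    exact List.nodup_four_iff.2 ⟨Ne.symm h12, h22, h21, h1t2, h11, Ne.symm htt⟩
  have hT4 := card_eq_four_of_nodup hd
  obtain ⟨h12, h11, h1t2, h21, h22, htt⟩ := List.nodup_four_iff.1 hd
  simp only [insert_subset_iff, singleton_subset_iff] at hT
  obtain ⟨hs₁, hs₂, ht₁, ht₂⟩ := hT
  by_cases h₁ : s(s₁, t₁) ∈ F
  · have h₂ := h.resolve_left (not_not.2 h₁)
    have hne : s(s₁, t₁) ≠ s(s₂, t₂) := by simp [h12, h1t2]
    have h2f : 2 ≤ #(F ∩ S.sym2) := by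
      rw [← card_pair hne]
      exact card_le_card (by simp [insert_subset_iff, h₁, h₂, hs₁, hs₂, ht₁, ht₂])
    obtain ⟨w, hwS, hwT⟩ := exists_mem_notMem_of_card_lt_card (s := {s₁, s₂, t₁, t₂}) (t := S)
      (by omega)
    simp only [mem_insert, mem_singleton, not_or] at hwT
    refine hW.pairedDPCOn_of_hamPathOn (by simp [insert_subset_iff, hs₁, hwS, ht₁]) hs₂ ht₂
      (by simp [*, Ne.symm]) (by simp [*, Ne.symm]) h22 (.triple (hW.adj hwS hs₁ hwT.1
        (by simp [*])).symm (hW.adj hwS ht₁ hwT.2.2.1 (by simp [*])) h11) (.inr ?_)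
    have := card_le_three (a := s₁) (b := w) (c := t₁)
    omega
  · refine hW.pairedDPCOn_of_hamPathOn (by simp [insert_subset_iff, hs₁, ht₁]) hs₂ ht₂
      (by simp [*, Ne.symm]) (by simp [*, Ne.symm]) h22 (.pair (faultGraph_adj.2 ⟨h11, h₁⟩)) ?_
    rw [card_pair h11, or_iff_not_imp_left, not_not]
    intro h₂
    have := card_pos.2 ⟨_, mem_inter.2 ⟨h₂, mk_mem_sym2_iff.2 ⟨hs₂, ht₂⟩⟩⟩
    omega

theorem pairedDPCOn_of_good_neighbors_subset (hd : [s₁, s₂, t₁, t₂].Nodup)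
    (hT : {s₁, s₂, t₁, t₂} ⊆ S) (hv : v ∈ S) (hvT : v ∉ ({s₁, s₂, t₁, t₂} : Finset V))
    (hgood : ∀ u ∈ S.erase v, s(v, u) ∉ F → u ∈ ({s₁, s₂, t₁, t₂} : Finset V))
    (hbig : #S < 2 * #(faultNeighborFinset F S v) + 4) (hF : #(F ∩ S.sym2) ≤ #S - 4)
    (h7 : #S = 7 → #(F ∩ S.sym2) ≤ 2) : PairedDPCOn (faultGraph F) S s₁ t₁ s₂ t₂ := by
  have hcard := card_faultNeighborFinset_add_card_good (F := F) hv
  have hdrop := card_faultNeighborFinset_add_card_le (F := F) hv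
  have hsplit : ∀ {p q p' q'}, p ∈ S.erase v → q ∈ S.erase v → s(v, p) ∉ F → s(v, q) ∉ F →
      p ≠ q → p' ∈ S → q' ∈ S → p' ≠ q' → p' ∉ ({p, v, q} : Finset V) →
      q' ∉ ({p, v, q} : Finset V) → PairedDPCOn (faultGraph F) S p q p' q' := by
    intro p q p' q' hp hq hvp hvq hpq hp' hq' hp'q' hp'B hq'B
    refine .of_subset (by simp [insert_subset_iff, mem_of_mem_erase hp, mem_of_mem_erase hq, hv])
      (.triple (faultGraph_adj.2 ⟨(ne_of_mem_erase hp), by rwa [Sym2.eq_swap]⟩)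
        (faultGraph_adj.2 ⟨(ne_of_mem_erase hq).symm, hvq⟩) hpq)
      (hamPathOn_of_card_faults_le _ F (mem_sdiff.2 ⟨hp', hp'B⟩) (mem_sdiff.2 ⟨hq', hq'B⟩) hp'q' ?_)
    have hsub : S \ {p, v, q} ⊆ S.erase v := fun u hu => by
      simp only [mem_sdiff, mem_insert, mem_singleton, not_or, mem_erase] at hu ⊢
      tauto
    have := card_le_card (inter_subset_inter_left (sym2_mono hsub) : F ∩ _ ⊆ F ∩ _)
    have := le_card_sdiff {p, v, q} S
    have := card_le_three (a := p) (b := v) (c := q)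
    omega
  have hGv : {u ∈ S.erase v | s(v, u) ∉ F} ⊆ {s₁, s₂, t₁, t₂} := fun u hu =>
    hgood u (mem_filter.1 hu).1 (mem_filter.1 hu).2
  have h4 := card_eq_four_of_nodup hd ▸ card_le_card hT
  obtain ⟨h12, h11, h1t2, h21, h22, htt⟩ := List.nodup_four_iff.1 hd
  simp only [insert_subset_iff, singleton_subset_iff] at hT
  simp only [mem_insert, mem_singleton, not_or] at hvT
  rcases mem_and_mem_or_mem_and_mem hGv (by omega) with ⟨h₁, h₂⟩ | ⟨h₁, h₂⟩
  · simp only [mem_filter] at h₁ h₂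
    exact hsplit h₁.1 h₂.1 h₁.2 h₂.2 h11 hT.2.1 hT.2.2.2 h22 (by simp [*, Ne.symm])
      (by simp [*, Ne.symm])
  · simp only [mem_filter] at h₁ h₂
    exact (hsplit h₁.1 h₂.1 h₁.2 h₂.2 h22 hT.1 hT.2.2.1 h11 (by simp [*, Ne.symm])
      (by simp [*, Ne.symm])).symm

theorem pairedDPCOn_of_faultsWithin_erase (hd : [s₁, s₂, t₁, t₂].Nodup)
    (hT : {s₁, s₂, t₁, t₂} ⊆ S) (hv : v ∈ S) (hvT : v ∉ ({s₁, s₂, t₁, t₂} : Finset V))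
    (hW : FaultsWithin F (S.erase v) {s₁, s₂, t₁, t₂}) (hS : 7 ≤ #S)
    (hdeg : 2 * #(faultNeighborFinset F S v) + 6 ≤ #S) :
    PairedDPCOn (faultGraph F) S s₁ t₁ s₂ t₂ := by
  have hT4 := card_eq_four_of_nodup hd
  obtain ⟨c, hc, hcT⟩ := exists_mem_notMem_of_card_lt_card (s := {s₁, s₂, t₁, t₂})
    (t := S.erase v) (by rw [card_erase_of_mem hv]; omega)
  obtain ⟨h12, h11, h1t2, h21, h22, htt⟩ := List.nodup_four_iff.1 hd
  simp only [insert_subset_iff, singleton_subset_iff] at hT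
  obtain ⟨hs₁, hs₂, ht₁, ht₂⟩ := hT
  simp only [mem_insert, mem_singleton, not_or] at hvT hcT
  have hcv := ne_of_mem_erase hc
  have hB : ({s₂, c, t₂} : Finset V) ⊆ S := by
    simp [insert_subset_iff, hs₂, ht₂, mem_of_mem_erase hc]
  have hA : HamPathOn (faultGraph F) ((S \ {s₂, c, t₂}).erase v) s₁ t₁ := by
    refine hamPathOn_of_faultsWithin (by simp [*, Ne.symm]) (by simp [*, Ne.symm]) h11
      (hW.mono (erase_subset_erase v sdiff_subset) fun a ha haT => ?_) (.inr ?_)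
    · simp only [mem_erase, mem_sdiff, mem_insert, mem_singleton] at ha haT ⊢
      grind
    · have := le_card_sdiff {s₂, c, t₂} S
      have := card_le_three (a := s₂) (b := c) (c := t₂)
      rw [card_erase_of_mem (by simp [*, Ne.symm])]
      omega
  refine (PairedDPCOn.of_subset hB (.triple ?_ ?_ h22) (hA.of_erase ?_ ?_)).symm
  · exact (hW.adj hc (mem_erase.2 ⟨Ne.symm hvT.2.1, hs₂⟩) (by grind) (by simp [hcT])).symm
  · exact hW.adj hc (mem_erase.2 ⟨Ne.symm hvT.2.2.2, ht₂⟩) (by grind) (by simp [hcT])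
  · simp [*, Ne.symm]
  · have := card_le_card (faultNeighborFinset_mono (u := v) (F := F) (sdiff_subset (s := S)
      (t := {s₂, c, t₂})))
    have := le_card_sdiff {s₂, c, t₂} S
    have := card_le_three (a := s₂) (b := c) (c := t₂)
    omega

theorem pairedDPCOn_of_card_eq_eight (hd : [s₁, s₂, t₁, t₂].Nodup)
    (hT : {s₁, s₂, t₁, t₂} ⊆ S) (hS : #S = 8) (hv : v ∈ S)
    (hvT : v ∉ ({s₁, s₂, t₁, t₂} : Finset V)) (hmax : ∀ w ∈ S, w ∉ ({s₁, s₂, t₁, t₂} : Finset V) →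
      #(faultNeighborFinset F S w) ≤ #(faultNeighborFinset F S v))
    (hd1 : 0 < #(faultNeighborFinset F S v)) (hF : #(F ∩ S.sym2) ≤ 4)
    (h3 : 3 ≤ #(F ∩ (S.erase v).sym2))
    (ih : ∀ S' ⊆ S, {s₁, s₂, t₁, t₂} ⊆ S' → #S' = 6 → #(F ∩ S'.sym2) ≤ 2 →
      PairedDPCOn (faultGraph F) S' s₁ t₁ s₂ t₂) :
    PairedDPCOn (faultGraph F) S s₁ t₁ s₂ t₂ := by
  have hdrop := card_faultNeighborFinset_add_card_le (F := F) hv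
  by_cases hW : FaultsWithin F (S.erase v) {s₁, s₂, t₁, t₂}
  · exact pairedDPCOn_of_faultsWithin_erase hd hT hv hvT hW (by omega) (by omega)
  -- a second faulty non-terminal `w` is removed as well, leaving at most two faults on six vertices
  obtain ⟨w, hw, hwT, hwd⟩ := exists_faultNeighborFinset_nonempty hW
  have hdrop' := card_faultNeighborFinset_add_card_le (F := F) hw
  have hw1 := (card_le_card (faultNeighborFinset_mono (u := w) (F := F) (erase_subset v S))).trans
    (hmax w (mem_of_mem_erase hw) hwT)
  have hwd := hwd.card_pos
  refine ((ih _ ((erase_subset _ _).trans (erase_subset _ _)) ?_ ?_ (by omega)).of_erase hw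
    (by rw [card_erase_of_mem hv]; omega)).of_erase hv (by omega)
  · exact subset_erase.2 ⟨subset_erase.2 ⟨hT, hvT⟩, hwT⟩
  · rw [card_erase_of_mem hw, card_erase_of_mem hv]; omega

end PairedDPC

-- On seven vertices a faulty triangle on the three non-terminals leaves no cover, so only two
-- faults are allowed there; this is why eight vertices need `pairedDPCOn_of_card_eq_eight`.
theorem pairedDPCOn_of_card_faults_le {s₁ t₁ s₂ t₂ : V} (S : Finset V) (F : Finset (Sym2 V))
    (hd : [s₁, s₂, t₁, t₂].Nodup) (hT : {s₁, s₂, t₁, t₂} ⊆ S) (hF : #(F ∩ S.sym2) ≤ #S - 4)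
    (h7 : #S = 7 → #(F ∩ S.sym2) ≤ 2) : PairedDPCOn (faultGraph F) S s₁ t₁ s₂ t₂ := by
  induction S using Finset.strongInduction generalizing F with
  | H S ih =>
  set T : Finset V := {s₁, s₂, t₁, t₂}
  have hT4 : #T = 4 := card_eq_four_of_nodup hd
  have h4 := hT4 ▸ card_le_card hT
  by_cases hW : FaultsWithin F S T
  · exact pairedDPCOn_of_faultsWithin hd hT hW hF
  obtain ⟨u, hu, huT, hud⟩ := exists_faultNeighborFinset_nonempty hW
  obtain ⟨v, hv, hvmax⟩ := exists_max_image (S \ T) (fun w => #(faultNeighborFinset F S w))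
    ⟨u, mem_sdiff.2 ⟨hu, huT⟩⟩
  obtain ⟨hvS, hvT⟩ := mem_sdiff.1 hv
  have hmax : ∀ w ∈ S, w ∉ T → #(faultNeighborFinset F S w) ≤ #(faultNeighborFinset F S v) :=
    fun w hw hwT => hvmax w (mem_sdiff.2 ⟨hw, hwT⟩)
  have hd1 := hud.card_pos.trans_le (hmax u hu huT)
  have hdrop := card_faultNeighborFinset_add_card_le (F := F) hvS
  have hTv : T ⊆ S.erase v := subset_erase.2 ⟨hT, hvT⟩
  by_cases hsmall : 2 * #(faultNeighborFinset F S v) + 4 ≤ #S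
  · by_cases h8 : #S = 8 ∧ 3 ≤ #(F ∩ (S.erase v).sym2)
    · refine pairedDPCOn_of_card_eq_eight hd hT h8.1 hvS hvT hmax hd1 (by omega) h8.2
        fun S' hS' hTS' h6 hF' =>
          ih S' (hS'.ssubset_of_ne (by rintro rfl; omega)) F hTS' (by omega) (by omega)
    · refine (ih _ (erase_ssubset hvS) F hTv ?_ ?_).of_erase hvS hsmall <;>
        rw [card_erase_of_mem hvS] <;> omega
  by_cases hg : ∃ g₂ ∈ S.erase v, g₂ ∉ T ∧ s(v, g₂) ∉ F
  · obtain ⟨g₂, hg₂, hg₂T, h₂⟩ := hg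
    obtain ⟨g₁, hg₁, hg₁₂, h₁⟩ := exists_good_neighbor_not_mem (F := F) (X := {g₂}) hvS
      (by rw [card_singleton]; omega)
    have hmerge := card_inheritFaults_inter_add_le (F := F) (g₁ := g₁) hvS hg₂
    obtain ⟨-, h11, -, -, h22, -⟩ := List.nodup_four_iff.1 hd
    refine (ih _ ((erase_ssubset hg₂).trans (erase_ssubset hvS)) _ (subset_erase.2 ⟨hTv, hg₂T⟩)
      ?_ ?_).of_inheritFaults h11 h22 hvS hg₂ (mem_erase.2 ⟨by simpa using hg₁₂, hg₁⟩) h₁ h₂ <;>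
      rw [card_erase_of_mem hg₂, card_erase_of_mem hvS] <;> omega
  · push Not at hg
    exact pairedDPCOn_of_good_neighbors_subset hd hT hvS hvT
      (fun w hw hwF => by_contra fun hwT => hwF (hg w hw hwT)) (by omega) hF h7

theorem stmt1_general (n : ℕ) (hn7 : n ≠ 7) (F : Finset (Sym2 (Fin n)))
    (hF : F.card ≤ n - 4) (s₁ s₂ t₁ t₂ : Fin n) (hd : [s₁, s₂, t₁, t₂].Nodup) :
    HasPaired2DPC ((⊤ : SimpleGraph (Fin n)).deleteEdges ↑F) s₁ t₁ s₂ t₂ := by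
  have hcard : #(F ∩ univ.sym2) ≤ #(univ : Finset (Fin n)) - 4 := by simpa using hF
  exact (pairedDPCOn_of_card_faults_le univ F hd (subset_univ _) hcard
    fun h => absurd (by simpa using h) hn7).hasPaired2DPC

/-- For `n ≥ 4`, `n ≠ 7`, `K_n` minus at most `n - 4` edges is paired 2-disjoint path coverable. -/
theorem stmt1 (n : ℕ) (hn : 4 ≤ n) (hn7 : n ≠ 7) (F : Finset (Sym2 (Fin n)))
    (hF : F.card ≤ n - 4) (s₁ s₂ t₁ t₂ : Fin n) (hd : [s₁, s₂, t₁, t₂].Nodup) :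
    HasPaired2DPC ((⊤ : SimpleGraph (Fin n)).deleteEdges ↑F) s₁ t₁ s₂ t₂ :=
  stmt1_general n hn7 F hF s₁ s₂ t₁ t₂ hd
end

section
/- For n = 7, for any edge set F of K_7 with |F| ≤ 2 and any four distinct vertices s₁, s₂, t₁, t₂, the graph K_7 − F contains two vertex-disjoint paths from s₁ to t₁ and from s₂ to t₂ that together cover all 7 vertices. -/
/-!
Let `x, y, z` be the three vertices of `K₇` other than `s₁, s₂, t₁, t₂`. Each cyclic rotation
`(a, b, c)` of `(x, y, z)` gives the cover `s₁ a t₁`, `s₂ b c t₂`, and the edge sets of these three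
covers are pairwise disjoint. A deleted edge therefore blocks at most one of them, so two deleted
edges leave one of the three covers intact.
-/

open SimpleGraph Finset

theorem List.Nodup.exists_nodup_append_forall_mem {α : Type*} [Fintype α] [DecidableEq α]
    {l : List α} (hl : l.Nodup) :
    ∃ l' : List α, l'.length = Fintype.card α - l.length ∧ (l ++ l').Nodup ∧ ∀ a, a ∈ l ++ l' := by
  refine ⟨(univ \ l.toFinset).toList, ?_, ?_, fun a => ?_⟩
  · rw [length_toList, card_univ_sdiff, List.toFinset_card_of_nodup hl]
  · refine List.nodup_append.2 ⟨hl, nodup_toList _, ?_⟩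
    rintro a ha b hb rfl
    simp [ha] at hb
  · by_cases ha : a ∈ l <;> simp [ha]

theorem Finset.exists_disjoint_of_card_lt {ι α : Type*} [DecidableEq α] {s : Finset ι}
    {A : ι → Finset α} (hA : (s : Set ι).PairwiseDisjoint A) {F : Finset α} (hF : #F < #s) :
    ∃ i ∈ s, Disjoint (A i) F := by
  by_contra! h
  have : #s ≤ #F := calc
    #s = ∑ i ∈ s, 1 := card_eq_sum_ones s
    _ ≤ ∑ i ∈ s, #(A i ∩ F) :=
      sum_le_sum fun i hi => card_pos.2 (not_disjoint_iff_nonempty_inter.1 (h i hi))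
    _ = #(s.biUnion fun i => A i ∩ F) :=
      (card_biUnion (hA.mono_on fun _ _ => inter_subset_left)).symm
    _ ≤ #F := card_le_card (biUnion_subset.2 fun _ _ => inter_subset_right)
  omega

variable {V : Type*}

theorem hasPaired2DPC_of_adj {G : SimpleGraph V} {s₁ t₁ s₂ t₂ x y z : V}
    (hnd : [s₁, s₂, t₁, t₂, x, y, z].Nodup) (hcov : ∀ v, v ∈ [s₁, s₂, t₁, t₂, x, y, z])
    (h₁ : G.Adj s₁ x) (h₂ : G.Adj x t₁) (h₃ : G.Adj s₂ y) (h₄ : G.Adj y z) (h₅ : G.Adj z t₂) :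
    HasPaired2DPC G s₁ t₁ s₂ t₂ := by
  let p : G.Walk s₁ t₁ := .cons h₁ (.cons h₂ .nil)
  let q : G.Walk s₂ t₂ := .cons h₃ (.cons h₄ (.cons h₅ .nil))
  have hpq : (p.support ++ q.support).Nodup := by
    simp only [p, q, Walk.support_cons, Walk.support_nil, List.cons_append, List.nil_append,
      List.nodup_cons, List.mem_cons, List.not_mem_nil] at hnd ⊢
    grind
  obtain ⟨hp, hq, hdisj⟩ := List.nodup_append.1 hpq
  refine ⟨p, q, .mk' hp, .mk' hq, fun v hvp hvq => hdisj v hvp v hvq rfl, fun v => ?_⟩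
  have := hcov v
  simp only [p, q, Walk.support_cons, Walk.support_nil, List.mem_cons] at this ⊢
  tauto

variable [DecidableEq V]

def coverEdges (s₁ t₁ s₂ t₂ x y z : V) : Finset (Sym2 V) :=
  {s(s₁, x), s(x, t₁), s(s₂, y), s(y, z), s(z, t₂)}

theorem hasPaired2DPC_top_deleteEdges_of_disjoint {F : Finset (Sym2 V)} {s₁ t₁ s₂ t₂ x y z : V}
    (hnd : [s₁, s₂, t₁, t₂, x, y, z].Nodup) (hcov : ∀ v, v ∈ [s₁, s₂, t₁, t₂, x, y, z])
    (hF : Disjoint (coverEdges s₁ t₁ s₂ t₂ x y z) F) :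
    HasPaired2DPC ((⊤ : SimpleGraph V).deleteEdges F) s₁ t₁ s₂ t₂ := by
  have hne := hnd
  simp only [List.nodup_cons, List.mem_cons, List.not_mem_nil] at hne
  refine hasPaired2DPC_of_adj hnd hcov ?_ ?_ ?_ ?_ ?_ <;>
    refine deleteEdges_adj.2 ⟨(top_adj _ _).2 (by grind), Finset.disjoint_left.1 hF ?_⟩ <;>
    simp [coverEdges]

theorem disjoint_coverEdges_rotate {s₁ t₁ s₂ t₂ x y z : V}
    (hnd : [s₁, s₂, t₁, t₂, x, y, z].Nodup) :
    Disjoint (coverEdges s₁ t₁ s₂ t₂ x y z) (coverEdges s₁ t₁ s₂ t₂ y z x) := by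
  simp only [List.nodup_cons, List.mem_cons, List.not_mem_nil] at hnd
  simp [coverEdges, Finset.disjoint_left]
  grind

theorem hasPaired2DPC_top_deleteEdges_of_card_eq_seven [Fintype V] (hV : Fintype.card V = 7)
    {F : Finset (Sym2 V)} (hF : #F ≤ 2) {s₁ t₁ s₂ t₂ : V} (hd : [s₁, s₂, t₁, t₂].Nodup) :
    HasPaired2DPC ((⊤ : SimpleGraph V).deleteEdges F) s₁ t₁ s₂ t₂ := by
  obtain ⟨l, hlen, hnd, hcov⟩ := hd.exists_nodup_append_forall_mem
  obtain ⟨x, y, z, rfl⟩ := List.length_eq_three.1 (by simpa [hV] using hlen)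
  have hrot : ([s₁, s₂, t₁, t₂] ++ [y, z, x]).Perm ([s₁, s₂, t₁, t₂] ++ [x, y, z]) :=
    .append_left _ (List.rotate_perm [x, y, z] 1)
  have hrot₂ : ([s₁, s₂, t₁, t₂] ++ [z, x, y]).Perm ([s₁, s₂, t₁, t₂] ++ [x, y, z]) :=
    .append_left _ (List.rotate_perm [x, y, z] 2)
  have hnd₁ := hrot.nodup_iff.2 hnd
  have hnd₂ := hrot₂.nodup_iff.2 hnd
  let A : Fin 3 → Finset (Sym2 V) := ![coverEdges s₁ t₁ s₂ t₂ x y z,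
    coverEdges s₁ t₁ s₂ t₂ y z x, coverEdges s₁ t₁ s₂ t₂ z x y]
  have hA : ((univ : Finset (Fin 3)) : Set (Fin 3)).PairwiseDisjoint A := by
    have h₀ := disjoint_coverEdges_rotate hnd
    have h₁ := disjoint_coverEdges_rotate hnd₁
    have h₂ := disjoint_coverEdges_rotate hnd₂
    intro i _ j _ hij
    fin_cases i <;> fin_cases j <;>
      simp [A, Function.onFun, h₀, h₁, h₂, h₀.symm, h₁.symm, h₂.symm] at hij ⊢
  obtain ⟨i, -, hi⟩ := exists_disjoint_of_card_lt (F := F) hA (by simp; omega)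
  fin_cases i
  · exact hasPaired2DPC_top_deleteEdges_of_disjoint hnd hcov hi
  · exact hasPaired2DPC_top_deleteEdges_of_disjoint hnd₁ (fun v => hrot.mem_iff.2 (hcov v)) hi
  · exact hasPaired2DPC_top_deleteEdges_of_disjoint hnd₂ (fun v => hrot₂.mem_iff.2 (hcov v)) hi

/-- `K_7` minus at most `2` edges is paired 2-disjoint path coverable. -/
theorem stmt2 (F : Finset (Sym2 (Fin 7))) (hF : F.card ≤ 2)
    (s₁ s₂ t₁ t₂ : Fin 7) (hd : [s₁, s₂, t₁, t₂].Nodup) :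
    HasPaired2DPC ((⊤ : SimpleGraph (Fin 7)).deleteEdges ↑F) s₁ t₁ s₂ t₂ :=
  hasPaired2DPC_top_deleteEdges_of_card_eq_seven (Fintype.card_fin 7) hF hd
end

section
/- For n ≥ 3 and k ≥ 1, in BC(n,k), if s₁, s₂, t₁, t₂ lie in four pairwise distinct subgraphs BC[l_{s₁}], BC[l_{s₂}], BC[l_{t₁}], BC[l_{t₂}] and there are no faulty edges, then BC(n,k) contains two vertex-disjoint paths from s₁ to t₁ and from s₂ to t₂ covering all vertices, provided the complete graph K_n on the n subgraph labels admits a paired 2-DPC connecting {l_{s₁}, l_{s₂}} to {l_{t₁}, l_{t₂}} and each BC[m] is Hamiltonian-connected. -/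
open SimpleGraph

/-- The logical graph of BCube(n,k). -/
def BC (n k : ℕ) : SimpleGraph (Fin (k+1) → Fin n) where
  Adj u v := ∃! i, u i ≠ v i
  symm := by
    constructor
    rintro u v ⟨i, hi, hu⟩
    exact ⟨i, hi.symm, fun j hj => hu j hj.symm⟩
  loopless := by
    constructor
    rintro u ⟨i, hi, -⟩
    exact hi rfl

/-!
Follow each label path of the 2-DPC in the complete graph on the labels: inside every block
it visits, take a Hamiltonian path of that block from the entry vertex to an exit vertex, and
cross to the next block along the matching edge that changes the last coordinate. The exit
vertex is chosen by giving coordinate `0` a value different from those of the entry vertex and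
of the final target (possible as `n ≥ 3`), so that the next entry vertex is never the target
and the Hamiltonian path in the last block exists. The lifted path then covers exactly the
blocks whose labels lie on the label path, so disjointness and covering lift from the labels.
-/

namespace SimpleGraph

variable {V W : Type*} {G : SimpleGraph V} {H : SimpleGraph W}

lemma Walk.IsPath.append_cons {u v w x : V} {p : G.Walk u v} {q : G.Walk w x}
    (hp : p.IsPath) (hq : q.IsPath) (h : G.Adj v w) (hpq : ∀ y ∈ p.support, y ∉ q.support) :
    (p.append (cons h q)).IsPath := by
  rw [isPath_def, support_append, support_cons, List.tail_cons, List.nodup_append]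
  exact ⟨hp.support_nodup, hq.support_nodup, fun y hy z hz hyz => hpq y hy (hyz ▸ hz)⟩

variable [DecidableEq V]

def IsHamiltonianConnected (G : SimpleGraph V) : Prop :=
  ∀ x y, x ≠ y → ∃ p : G.Walk x y, p.IsHamiltonian

lemma IsHamiltonianConnected.exists_isPath_support_iff {S : Set V}
    (hS : (G.induce S).IsHamiltonianConnected) {s t : V} (hs : s ∈ S) (ht : t ∈ S)
    (hst : s ≠ t) : ∃ p : G.Walk s t, p.IsPath ∧ ∀ v, v ∈ p.support ↔ v ∈ S := by
  obtain ⟨p, hp⟩ := hS ⟨s, hs⟩ ⟨t, ht⟩ (by simpa using hst)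
  refine ⟨p.map (Embedding.induce S).toHom, hp.isPath.map Subtype.val_injective, fun v => ?_⟩
  show v ∈ (p.map _).support ↔ _
  rw [Walk.support_map, List.mem_map]
  exact ⟨by rintro ⟨x, -, rfl⟩; exact x.2, fun hv => ⟨⟨v, hv⟩, hp.mem_support _, rfl⟩⟩

/-- The edge `z z'` chains a Hamiltonian path of the fiber of `s` entered at `s` to one of the
fiber over `c`; `z' ≠ t` keeps the new entry vertex off the final target `t`. -/
def HasAvoidingEdgeLifts (G : SimpleGraph V) (H : SimpleGraph W) (f : V → W) : Prop :=
  ∀ ⦃s t : V⦄ ⦃c : W⦄, H.Adj (f s) c →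
    ∃ z z', f z = f s ∧ f z' = c ∧ z ≠ s ∧ z' ≠ t ∧ G.Adj z z'

variable {f : V → W}

theorem Walk.IsPath.exists_lift_covering_fibers
    (hfib : ∀ m, (G.induce {v | f v = m}).IsHamiltonianConnected)
    (hlift : HasAvoidingEdgeLifts G H f) {a b : W} {w : H.Walk a b} (hw : w.IsPath)
    {s t : V} (hs : f s = a) (ht : f t = b) (hst : s ≠ t) :
    ∃ p : G.Walk s t, p.IsPath ∧ ∀ v, v ∈ p.support ↔ f v ∈ w.support := by
  induction w generalizing s with
  | nil =>
    simpa using (hfib _).exists_isPath_support_iff hs ht hst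
  | @cons a c b h w ih =>
    obtain ⟨hw, ha⟩ := cons_isPath_iff h w |>.mp hw
    obtain ⟨z, z', hz, hz', hzs, hz't, hzz'⟩ := hlift (t := t) (hs ▸ h)
    obtain ⟨P, hP, hPsupp⟩ :=
      (hfib a).exists_isPath_support_iff (S := {v | f v = a}) hs (hz.trans hs) hzs.symm
    obtain ⟨Q, hQ, hQsupp⟩ := ih hw hz' ht hz't
    refine ⟨P.append (cons hzz' Q), hP.append_cons hQ hzz' fun y hyP hyQ => ?_, fun v => ?_⟩
    · exact ha ((hPsupp y).mp hyP ▸ (hQsupp y).mp hyQ)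
    · simp only [support_append, support_cons, List.tail_cons, List.mem_append, List.mem_cons,
        hPsupp, hQsupp, Set.mem_ofPred_eq]

theorem HasPaired2DPC.lift (hfib : ∀ m, (G.induce {v | f v = m}).IsHamiltonianConnected)
    (hlift : HasAvoidingEdgeLifts G H f) {s₁ t₁ s₂ t₂ : V} (h₁ : s₁ ≠ t₁) (h₂ : s₂ ≠ t₂)
    (hH : HasPaired2DPC H (f s₁) (f t₁) (f s₂) (f t₂)) : HasPaired2DPC G s₁ t₁ s₂ t₂ := by
  obtain ⟨p, q, hp, hq, hdisj, hcov⟩ := hH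
  obtain ⟨P, hP, hPsupp⟩ := hp.exists_lift_covering_fibers hfib hlift rfl rfl h₁
  obtain ⟨Q, hQ, hQsupp⟩ := hq.exists_lift_covering_fibers hfib hlift rfl rfl h₂
  refine ⟨P, Q, hP, hQ, fun v hvP hvQ => hdisj _ ((hPsupp v).mp hvP) ((hQsupp v).mp hvQ),
    fun v => ?_⟩
  rw [hPsupp, hQsupp]
  exact hcov (f v)

end SimpleGraph

namespace BC

variable {n k : ℕ}

lemma adj_update {u : Fin (k+1) → Fin n} {i : Fin (k+1)} {c : Fin n} (h : u i ≠ c) :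
    (BC n k).Adj u (Function.update u i c) :=
  ⟨i, by simpa using h, fun j hj => by_contra fun hji => hj (by simp [hji])⟩

lemma hasAvoidingEdgeLifts (hn : 3 ≤ n) {i j : Fin (k+1)} (hji : j ≠ i) :
    HasAvoidingEdgeLifts (BC n k) ⊤ (· i) := by
  intro s t c hc
  obtain ⟨α, hαs, hαt⟩ := Fin.exists_ne_and_ne_of_two_lt (s j) (t j) hn
  have hz : (Function.update s j α) i = s i := Function.update_of_ne hji.symm _ _
  refine ⟨Function.update s j α, Function.update (Function.update s j α) i c, hz, by simp,
    fun h => hαs ?_, fun h => hαt ?_, adj_update (hz ▸ hc)⟩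
  · simpa using congrFun h j
  · simpa [Function.update_of_ne hji] using congrFun h j

end BC

/-- If `s₁, s₂, t₁, t₂` lie in four pairwise distinct subgraphs `BC[·]` of the fault-free
`BC(n,k)`, the complete graph on the `n` subgraph labels admits a paired 2-DPC connecting
the corresponding label pairs, and each `BC[m]` is Hamiltonian-connected, then `BC(n,k)`
has a paired 2-DPC connecting `{s₁, s₂}` to `{t₁, t₂}`. -/
theorem stmt18 (n k : ℕ) (hn : 3 ≤ n) (hk : 1 ≤ k)
    (s₁ s₂ t₁ t₂ : Fin (k+1) → Fin n)
    (hdist : [s₁ (Fin.last k), s₂ (Fin.last k), t₁ (Fin.last k), t₂ (Fin.last k)].Nodup)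
    (hK : HasPaired2DPC (⊤ : SimpleGraph (Fin n))
      (s₁ (Fin.last k)) (t₁ (Fin.last k)) (s₂ (Fin.last k)) (t₂ (Fin.last k)))
    (hHam : ∀ m : Fin n, ∀ x y : ↥{v : Fin (k+1) → Fin n | v (Fin.last k) = m}, x ≠ y →
      ∃ p : ((BC n k).induce {v : Fin (k+1) → Fin n | v (Fin.last k) = m}).Walk x y,
        p.IsHamiltonian) :
    HasPaired2DPC (BC n k) s₁ t₁ s₂ t₂ := by
  have h₁ : s₁ ≠ t₁ := by rintro rfl; simp at hdist
  have h₂ : s₂ ≠ t₂ := by rintro rfl; simp at hdist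
  have hlast : (0 : Fin (k+1)) ≠ Fin.last k := by simp [Fin.ext_iff]; omega
  exact hK.lift hHam (BC.hasAvoidingEdgeLifts hn hlast) h₁ h₂
end
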